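/- arXiv:1804.02738 — 3 statements merged into one kernel-verified Lean document; each statement's English description precedes it below -/
import Mathlib

section
/- For σ > 0 and c > 0, the function φ_c(x) = (2c(σ+1)/(σ²(cx)²+1))^{1/(2σ)} solves the ODE -φ'' + (c/2)φ^{2σ+1} - ((2σ+1)/(2σ+2)²)φ^{4σ+1} = 0 on ℝ. -/
/-!
Write `B = (σc)²x² + 1`, so that `φ_c = A^p B^(-p)` with `A = 2c(σ+1)` and `p = 1/(2σ)`.
Differentiating `B^r` twice gives `φ_c'' = φ_c · R(x)` for an explicit rational function `R`,
while `φ_c^(2σ) = A / B`. Hence every term of the equation is `φ_c` times a rational function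
of `x`, and after dividing by `φ_c` the equation is a polynomial identity.
-/

noncomputable def phi (σ c x : ℝ) : ℝ :=
  (2*c*(σ+1) / (σ^2 * (c*x)^2 + 1)) ^ (1/(2*σ))

open Real

section RpowSqAddOne

variable {a : ℝ}

theorem hasDerivAt_rpow_sq_add_one (ha : 0 ≤ a) (r x : ℝ) :
    HasDerivAt (fun y => (a * y ^ 2 + 1) ^ r) (2 * a * r * x * (a * x ^ 2 + 1) ^ (r - 1)) x := by
  have hB : a * x ^ 2 + 1 ≠ 0 := by positivity
  convert (((hasDerivAt_pow 2 x).const_mul a).add_const 1).rpow_const (p := r) (Or.inl hB) using 1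
  push_cast
  ring

theorem deriv_rpow_sq_add_one (ha : 0 ≤ a) (r : ℝ) :
    deriv (fun y => (a * y ^ 2 + 1) ^ r) = fun x => 2 * a * r * x * (a * x ^ 2 + 1) ^ (r - 1) :=
  funext fun x => (hasDerivAt_rpow_sq_add_one ha r x).deriv

theorem deriv_deriv_rpow_sq_add_one (ha : 0 ≤ a) (r x : ℝ) :
    deriv (deriv fun y => (a * y ^ 2 + 1) ^ r) x =
      (a * x ^ 2 + 1) ^ r * (2 * a * r * (a * x ^ 2 + 1 + 2 * (r - 1) * a * x ^ 2)
        / (a * x ^ 2 + 1) ^ 2) := by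
  have hB : 0 < a * x ^ 2 + 1 := by positivity
  have hderiv := ((hasDerivAt_id x).const_mul (2 * a * r)).mul
    (hasDerivAt_rpow_sq_add_one ha (r - 1) x)
  rw [deriv_rpow_sq_add_one ha]
  refine hderiv.deriv.trans ?_
  rw [sub_sub, rpow_sub hB, rpow_sub hB, rpow_one, one_add_one_eq_two, rpow_two, id]
  field_simp

end RpowSqAddOne

section Phi

variable {σ c : ℝ}

theorem phi_eq_const_mul (hσ : -1 ≤ σ) (hc : 0 ≤ c) :
    phi σ c = fun x =>
      (2 * c * (σ + 1)) ^ (1 / (2 * σ)) * ((σ * c) ^ 2 * x ^ 2 + 1) ^ (-(1 / (2 * σ))) := by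
  ext x
  have hσ' : 0 ≤ σ + 1 := by linarith
  have hA : 0 ≤ 2 * c * (σ + 1) := by positivity
  rw [phi, div_rpow hA (by positivity), rpow_neg (by positivity), div_eq_mul_inv, mul_pow c,
    ← mul_assoc, ← mul_pow]

theorem phi_pos (hσ : -1 < σ) (hc : 0 < c) (x : ℝ) : 0 < phi σ c x := by
  have : 0 < σ + 1 := by linarith
  unfold phi
  positivity

theorem phi_rpow_two_mul (hσ : 0 < σ) (hc : 0 ≤ c) (x : ℝ) :
    phi σ c x ^ (2 * σ) = 2 * c * (σ + 1) / ((σ * c) ^ 2 * x ^ 2 + 1) := by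
  rw [phi, ← rpow_mul (by positivity), one_div_mul_cancel (by positivity), rpow_one, mul_pow c,
    ← mul_assoc, ← mul_pow]

theorem deriv_deriv_phi (hσ : 0 < σ) (hc : 0 ≤ c) (x : ℝ) :
    deriv (deriv (phi σ c)) x =
      phi σ c x * (-(σ * c ^ 2) * ((σ * c) ^ 2 * x ^ 2 + 1 - (2 * σ + 1) * σ * c ^ 2 * x ^ 2)
        / ((σ * c) ^ 2 * x ^ 2 + 1) ^ 2) := by
  rw [phi_eq_const_mul (by linarith) hc, deriv_const_mul_field', deriv_const_mul_field']
  beta_reduce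
  rw [deriv_deriv_rpow_sq_add_one (sq_nonneg (σ * c))]
  field_simp
  ring

end Phi

theorem stmt2 (σ c : ℝ) (hσ : 0 < σ) (hc : 0 < c) (x : ℝ) :
    -(deriv (deriv (phi σ c)) x) + (c/2) * (phi σ c x) ^ (2*σ + 1)
      - ((2*σ + 1)/(2*σ + 2)^2) * (phi σ c x) ^ (4*σ + 1) = 0 := by
  have hφ := phi_pos (by linarith : -1 < σ) hc x
  have hφ_two_mul := phi_rpow_two_mul hσ hc.le x
  have hφ_two_mul_add_one : phi σ c x ^ (2 * σ + 1) = phi σ c x * phi σ c x ^ (2 * σ) := by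
    rw [rpow_add hφ, rpow_one, mul_comm]
  have hφ_four_mul_add_one : phi σ c x ^ (4 * σ + 1) = phi σ c x * (phi σ c x ^ (2 * σ)) ^ 2 := by
    rw [← rpow_natCast, ← rpow_mul hφ.le, rpow_add hφ, rpow_one, mul_comm]
    push_cast; ring_nf
  rw [deriv_deriv_phi hσ hc.le, hφ_two_mul_add_one, hφ_four_mul_add_one, hφ_two_mul]
  field_simp
  ring
end

section
/- For σ ∈ (1,2) and c > 0, let φ_c(x) = (2c(σ+1)/(σ²(cx)²+1))^{1/(2σ)} and define P(c) = -(c/2)·(1/2)∫φ_c² dx + (1/(2(2σ+2)))∫φ_c^{2σ+2} dx and M(c) = (1/2)∫φ_c² dx. Then P(c) = ((1-σ)/2) c M(c). -/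
/-!
With `p = 1/σ`, `A = 2c(σ+1)` and `b = σc` one has `φ_c^r = A^{r/(2σ)} ((bx)²+1)^{-r/(2σ)}`, so both
integrals in `P(c)` are multiples of `J_q = ∫ ((bx)²+1)^{-q}` with `q = p` and `q = p + 1`.
Integrating `(x ((bx)²+1)^{-q})' = (1-2q)((bx)²+1)^{-q} + 2q((bx)²+1)^{-(q+1)}` over `ℝ` gives
`2q J_{q+1} = (2q-1) J_q` for `q > 1/2` (that is, `σ < 2`), and the identity is then algebra.
-/

open MeasureTheory

noncomputable def Mass (σ c : ℝ) : ℝ := (1/2) * ∫ x : ℝ, (phi σ c x)^2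

noncomputable def Mom (σ c : ℝ) : ℝ :=
  -(c/2) * ((1/2) * ∫ x : ℝ, (phi σ c x)^2)
    + (1/(2*(2*σ+2))) * ∫ x : ℝ, (phi σ c x) ^ (2*σ + 2)

open Filter Topology

lemma integrable_rpow_neg_sq_mul_add_one {b q : ℝ} (hb : b ≠ 0) (hq : 1/2 < q) :
    Integrable (fun x : ℝ => ((b*x)^2 + 1) ^ (-q)) := by
  have h : Integrable (fun x : ℝ => (1 + ‖x‖^2) ^ (-(2*q)/2)) :=
    integrable_rpow_neg_one_add_norm_sq (by simp; linarith)
  refine ((integrable_comp_mul_left_iff _ hb).2 h).congr (Eventually.of_forall fun x => ?_)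
  simp only [Real.norm_eq_abs, sq_abs]
  ring_nf

lemma hasDerivAt_mul_rpow_neg_sq_mul_add_one (b q x : ℝ) :
    HasDerivAt (fun y : ℝ => y * ((b*y)^2 + 1) ^ (-q))
      ((1 - 2*q) * ((b*x)^2 + 1) ^ (-q) + 2*q * ((b*x)^2 + 1) ^ (-(q+1))) x := by
  have hD : 0 < (b*x)^2 + 1 := by positivity
  have hsq : HasDerivAt (fun y : ℝ => (b*y)^2 + 1) (2 * b^2 * x) x := by
    refine ((((hasDerivAt_id x).const_mul b).fun_pow 2).add_const 1).congr_deriv ?_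
    simp only [id, Nat.cast_ofNat]
    ring
  refine ((hasDerivAt_id x).fun_mul (hsq.rpow_const (p := -q) (Or.inl hD.ne'))).congr_deriv ?_
  have hsplit : ((b*x)^2 + 1) ^ (-q) = ((b*x)^2 + 1) * ((b*x)^2 + 1) ^ (-q-1) := by
    conv_lhs => rw [show -q = 1 + (-q-1) by ring, Real.rpow_add hD, Real.rpow_one]
  simp only [id_eq, show -(q+1) = -q-1 by ring]
  linear_combination 2*q * hsplit

lemma tendsto_mul_rpow_neg_sq_mul_add_one_atTop {b q : ℝ} (hb : 0 < b) (hq : 1/2 < q) :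
    Tendsto (fun x : ℝ => x * ((b*x)^2 + 1) ^ (-q)) atTop (𝓝 0) := by
  have hlim : Tendsto (fun x : ℝ => b ^ (-(2*q)) * x ^ (-(2*q-1))) atTop (𝓝 0) := by
    simpa using (tendsto_rpow_neg_atTop (by linarith : 0 < 2*q-1)).const_mul (b ^ (-(2*q)))
  refine squeeze_zero' ?_ ?_ hlim
  · filter_upwards [eventually_ge_atTop 0] with x hx
    positivity
  · filter_upwards [eventually_gt_atTop 0] with x hx
    have hbx : 0 < b*x := by positivity
    calc x * ((b*x)^2 + 1) ^ (-q) ≤ x * ((b*x)^2) ^ (-q) :=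
          mul_le_mul_of_nonneg_left
            (Real.rpow_le_rpow_of_nonpos (by positivity) (by linarith) (by linarith)) hx.le
      _ = b ^ (-(2*q)) * x ^ (-(2*q-1)) := by
          rw [← Real.rpow_natCast (b*x) 2, ← Real.rpow_mul hbx.le, Real.mul_rpow hb.le hx.le,
            show -(2*q-1) = 1 + ((2:ℕ) * -q) by push_cast; ring, Real.rpow_add hx, Real.rpow_one]
          push_cast [mul_neg]
          ring

lemma tendsto_mul_rpow_neg_sq_mul_add_one_atBot {b q : ℝ} (hb : 0 < b) (hq : 1/2 < q) :
    Tendsto (fun x : ℝ => x * ((b*x)^2 + 1) ^ (-q)) atBot (𝓝 0) := by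
  have h := ((tendsto_mul_rpow_neg_sq_mul_add_one_atTop hb hq).comp
    tendsto_neg_atBot_atTop).neg
  rw [neg_zero] at h
  refine h.congr fun x => ?_
  simp only [Function.comp_apply, mul_neg, neg_sq]
  ring

lemma integral_rpow_neg_sq_mul_add_one_succ {b q : ℝ} (hb : 0 < b) (hq : 1/2 < q) :
    2*q * ∫ x : ℝ, ((b*x)^2 + 1) ^ (-(q+1)) = (2*q - 1) * ∫ x : ℝ, ((b*x)^2 + 1) ^ (-q) := by
  have hJ := integrable_rpow_neg_sq_mul_add_one hb.ne' hq
  have hJ' := integrable_rpow_neg_sq_mul_add_one hb.ne' (q := q+1) (by linarith)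
  have h := integral_of_hasDerivAt_of_tendsto (hasDerivAt_mul_rpow_neg_sq_mul_add_one b q)
    ((hJ.const_mul _).add (hJ'.const_mul _))
    (tendsto_mul_rpow_neg_sq_mul_add_one_atBot hb hq)
    (tendsto_mul_rpow_neg_sq_mul_add_one_atTop hb hq)
  rw [integral_add (hJ.const_mul _) (hJ'.const_mul _), integral_const_mul,
    integral_const_mul, sub_zero] at h
  linarith

lemma phi_rpow {σ c : ℝ} (hσ : 0 < σ) (hc : 0 ≤ c) (s x : ℝ) :
    phi σ c x ^ (2*σ*s) = (2*c*(σ+1)) ^ s * ((σ*c*x)^2 + 1) ^ (-s) := by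
  have hD : 0 < (σ*c*x)^2 + 1 := by positivity
  rw [phi, show σ^2 * (c*x)^2 = (σ*c*x)^2 by ring, ← Real.rpow_mul (by positivity),
    show 1/(2*σ) * (2*σ*s) = s by field_simp, Real.div_rpow (by positivity) hD.le,
    Real.rpow_neg hD.le, div_eq_mul_inv]

lemma integral_phi_rpow {σ c : ℝ} (hσ : 0 < σ) (hc : 0 ≤ c) (s : ℝ) :
    ∫ x : ℝ, phi σ c x ^ (2*σ*s) = (2*c*(σ+1)) ^ s * ∫ x : ℝ, ((σ*c*x)^2 + 1) ^ (-s) := by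
  simp_rw [phi_rpow hσ hc s, integral_const_mul]

theorem stmt6 (σ c : ℝ) (hσ : σ ∈ Set.Ioo (1:ℝ) 2) (hc : 0 < c) :
    Mom σ c = ((1 - σ)/2) * c * Mass σ c := by
  obtain ⟨hσ1, hσ2⟩ := hσ
  have hσ0 : 0 < σ := by linarith
  have hmass : ∫ x : ℝ, phi σ c x ^ 2
      = (2*c*(σ+1)) ^ (1/σ) * ∫ x : ℝ, ((σ*c*x)^2 + 1) ^ (-(1/σ)) := by
    rw [← integral_phi_rpow hσ0 hc.le, show 2*σ*(1/σ) = (2:ℕ) by field_simp; norm_num]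
    simp only [Real.rpow_natCast]
  have hpot := integral_phi_rpow hσ0 hc.le (1/σ + 1)
  rw [show 2*σ*(1/σ + 1) = 2*σ + 2 by field_simp; ring] at hpot
  have hrec := integral_rpow_neg_sq_mul_add_one_succ (by positivity : 0 < σ*c)
    (by rw [div_lt_div_iff₀ two_pos hσ0]; linarith : 1/2 < 1/σ)
  set J := ∫ x : ℝ, ((σ*c*x)^2 + 1) ^ (-(1/σ))
  have hJ1 : ∫ x : ℝ, ((σ*c*x)^2 + 1) ^ (-(1/σ + 1)) = (2 - σ)/2 * J := by
    field_simp at hrec ⊢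
    linarith
  rw [Mom, Mass, hmass, hpot, hJ1, Real.rpow_add (by positivity), Real.rpow_one]
  field_simp
  ring
end

section
/- Let σ ∈ (1,2), c > 0, and let Φ_c be the complex endpoint soliton profile of gDNLS. Then ‖∂ₓΦ_c‖_{L²}² = (c²/4)‖Φ_c‖_{L²}². -/
open MeasureTheory Complex

noncomputable def Phi (σ c : ℝ) (x : ℝ) : ℂ :=
  (phi σ c x : ℂ) *
    Complex.exp (Complex.I * ((c/2) * x : ℝ)
      - (Complex.I / (2*σ + 2)) * ((∫ y in Set.Iio x, (phi σ c y) ^ (2*σ) : ℝ) : ℂ))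

/-!
Writing `Φ_c = φ_c e^{iθ}` with `θ' = c/2 - φ_c^{2σ}/(2σ+2)`, one gets
`|Φ_c'|² = φ_c'² + φ_c² θ'²`. For the explicit profile, `φ_c'/φ_c = -σc²x/d` and
`θ' = c/2 - c/d` with `d = σ²(cx)² + 1`, and `(σc²x/d)² + (c/2 - c/d)² = c²/4` since `σ²c²x² = d - 1`.
Hence `|Φ_c'|² = (c²/4)|Φ_c|²` holds pointwise, and the identity follows by integration.
-/

theorem HasDerivAt.ofReal_mul_exp_ofReal_mul_I {r θ : ℝ → ℝ} {r' θ' : ℝ} {x : ℝ}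
    (hr : HasDerivAt r r' x) (hθ : HasDerivAt θ θ' x) :
    HasDerivAt (fun x => (r x : ℂ) * Complex.exp (θ x * I))
      ((r' + ↑(r x * θ') * I) * Complex.exp (θ x * I)) x := by
  refine (hr.ofReal_comp.fun_mul (hθ.ofReal_comp.mul_const I).cexp).congr_deriv ?_
  push_cast
  ring

theorem Complex.norm_add_mul_I_mul_exp_ofReal_mul_I_sq (a b θ : ℝ) :
    ‖(a + b * I) * exp (θ * I)‖ ^ 2 = a ^ 2 + b ^ 2 := by
  rw [norm_mul, norm_exp_ofReal_mul_I, mul_one, Complex.sq_norm, normSq_add_mul_I]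

theorem hasDerivAt_integral_Iio {E : Type*} [NormedAddCommGroup E] [NormedSpace ℝ E]
    [CompleteSpace E] {f : ℝ → E} (hf : Integrable f) (hcont : Continuous f) (x : ℝ) :
    HasDerivAt (fun x => ∫ y in Set.Iio x, f y) (f x) x := by
  have hsplit : (fun x => ∫ y in Set.Iio x, f y)
      = fun x => (∫ y in (0:ℝ)..x, f y) + ∫ y in Set.Iio 0, f y := by
    funext z
    rw [← integral_Iic_eq_integral_Iio, ← integral_Iic_eq_integral_Iio,
      ← intervalIntegral.integral_Iic_sub_Iic hf.integrableOn hf.integrableOn, sub_add_cancel]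
  rw [hsplit]
  exact (intervalIntegral.integral_hasDerivAt_right hf.intervalIntegrable
    (hcont.stronglyMeasurableAtFilter _ _) hcont.continuousAt).add_const _

namespace EndpointSoliton

noncomputable def phiPow (σ c x : ℝ) : ℝ := 2 * c * (σ + 1) / (σ ^ 2 * (c * x) ^ 2 + 1)

noncomputable def phase (σ c x : ℝ) : ℝ :=
  c / 2 * x - (∫ y in Set.Iio x, phi σ c y ^ (2 * σ)) / (2 * σ + 2)

variable {σ c : ℝ}

theorem phi_eq (σ c x : ℝ) : phi σ c x = phiPow σ c x ^ (1 / (2 * σ)) := rfl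

theorem denom_pos (σ c x : ℝ) : 0 < σ ^ 2 * (c * x) ^ 2 + 1 := by positivity

theorem phiPow_pos (hσ : 0 < σ) (hc : 0 < c) (x : ℝ) : 0 < phiPow σ c x :=
  div_pos (by positivity) (denom_pos σ c x)

theorem phi_rpow_two_mul (hσ : 0 < σ) (hc : 0 < c) (x : ℝ) :
    phi σ c x ^ (2 * σ) = phiPow σ c x := by
  rw [phi_eq, ← Real.rpow_mul (phiPow_pos hσ hc x).le, one_div_mul_cancel (by positivity),
    Real.rpow_one]

theorem continuous_phiPow : Continuous (phiPow σ c) :=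
  continuous_const.div (by fun_prop) fun x => (denom_pos σ c x).ne'

theorem integrable_phiPow (hσ : 0 < σ) (hc : 0 < c) : Integrable (phiPow σ c) := by
  refine ((integrable_inv_one_add_sq.comp_mul_left' (mul_pos hσ hc).ne').const_mul
    (2 * c * (σ + 1))).congr (Filter.Eventually.of_forall fun x => ?_)
  simp only [phiPow]
  ring

theorem hasDerivAt_phiPow (x : ℝ) :
    HasDerivAt (phiPow σ c)
      (-(2 * σ ^ 2 * c ^ 2 * x / (σ ^ 2 * (c * x) ^ 2 + 1)) * phiPow σ c x) x := by
  have hd : HasDerivAt (fun x => σ ^ 2 * (c * x) ^ 2 + 1) (2 * σ ^ 2 * c ^ 2 * x) x := by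
    refine ((((hasDerivAt_id' x).const_mul c).fun_pow 2).const_mul (σ ^ 2)).add_const 1
      |>.congr_deriv ?_
    ring
  refine ((hasDerivAt_const x (2 * c * (σ + 1))).div hd (denom_pos σ c x).ne').congr_deriv ?_
  have := (denom_pos σ c x).ne'
  simp only [phiPow]
  field_simp
  ring

theorem hasDerivAt_phi (hσ : 0 < σ) (hc : 0 < c) (x : ℝ) :
    HasDerivAt (phi σ c) (-(σ * c ^ 2 * x / (σ ^ 2 * (c * x) ^ 2 + 1)) * phi σ c x) x := by
  have ht := phiPow_pos hσ hc x
  refine ((hasDerivAt_phiPow x).rpow_const (p := 1 / (2 * σ)) (Or.inl ht.ne')).congr_deriv ?_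
  rw [Real.rpow_sub_one ht.ne', ← phi_eq]
  have := (denom_pos σ c x).ne'
  field_simp

theorem hasDerivAt_phase (hσ : 0 < σ) (hc : 0 < c) (x : ℝ) :
    HasDerivAt (phase σ c) (c / 2 - c / (σ ^ 2 * (c * x) ^ 2 + 1)) x := by
  have hphase : phase σ c =
      fun x => c / 2 * x - (∫ y in Set.Iio x, phiPow σ c y) / (2 * σ + 2) := by
    funext x
    simp only [phase, phi_rpow_two_mul hσ hc]
  rw [hphase]
  refine (((hasDerivAt_id' x).const_mul (c / 2)).sub
    ((hasDerivAt_integral_Iio (integrable_phiPow hσ hc) continuous_phiPow x).div_const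
      (2 * σ + 2))).congr_deriv ?_
  have := (denom_pos σ c x).ne'
  simp only [phiPow]
  field_simp

theorem Phi_eq (σ c x : ℝ) : Phi σ c x = (phi σ c x : ℂ) * exp (phase σ c x * I) := by
  rw [Phi, phase]
  congr 2
  push_cast
  ring

theorem norm_deriv_Phi_sq (hσ : 0 < σ) (hc : 0 < c) (x : ℝ) :
    ‖deriv (Phi σ c) x‖ ^ 2 = c ^ 2 / 4 * ‖Phi σ c x‖ ^ 2 := by
  have hPhi : Phi σ c = fun x => (phi σ c x : ℂ) * exp (phase σ c x * I) := funext (Phi_eq σ c)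
  rw [hPhi, ((hasDerivAt_phi hσ hc x).ofReal_mul_exp_ofReal_mul_I
    (hasDerivAt_phase hσ hc x)).deriv, norm_add_mul_I_mul_exp_ofReal_mul_I_sq, norm_mul,
    norm_exp_ofReal_mul_I, mul_one, norm_real, Real.norm_eq_abs, sq_abs]
  have := (denom_pos σ c x).ne'
  field_simp
  ring

end EndpointSoliton

open EndpointSoliton in
theorem stmt10 (σ c : ℝ) (hσ : σ ∈ Set.Ioo (1:ℝ) 2) (hc : 0 < c) :
    (∫ x : ℝ, ‖deriv (Phi σ c) x‖^2) = (c^2/4) * ∫ x : ℝ, ‖Phi σ c x‖^2 := by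
  simp_rw [norm_deriv_Phi_sq (one_pos.trans hσ.1) hc]
  exact integral_const_mul _ _
end
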